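/- Let φ be a circulation-free positive flow and let ab be an arc in the support of φ. Then there exists a basic feasible solution f with f_{ab} > 0 such that min_{e ∈ supp f} φ_e ≥ (b*_min / b*_max) · φ_{ab} / |supp φ|. -/

import Mathlib

open scoped BigOperators

section PhysarumSetup

variable {V E : Type*} [Fintype V] [Fintype E] [DecidableEq V] [DecidableEq E]

/-- Incidence (boundary) matrix of the digraph given by `tail`/`head`:
`+1` if `i` is the tail of `e`, `-1` if `i` is the head of `e`, `0` otherwise. -/
def incMatrix (tail head : E → V) : Matrix V E ℝ :=
  Matrix.of fun i e => if tail e = i then (1 : ℝ) else if head e = i then -1 else 0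

/-- The digraph has no loops. -/
def NoLoops (tail head : E → V) : Prop := ∀ e, tail e ≠ head e

/-- The digraph has no multiple arcs. -/
def NoMultiple (tail head : E → V) : Prop :=
  ∀ e f, tail e = tail f → head e = head f → e = f

/-- Adjacency in the underlying undirected graph. -/
def Adj (tail head : E → V) (i j : V) : Prop :=
  ∃ e, (tail e = i ∧ head e = j) ∨ (tail e = j ∧ head e = i)

/-- The underlying undirected graph is connected. -/
def IsConnectedGraph (tail head : E → V) : Prop :=
  ∀ i j : V, Relation.ReflTransGen (Adj tail head) i j

/-- `φ` is a flow with source vector `b`: `Bφ = b`. -/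
def IsFlow (tail head : E → V) (b : V → ℝ) (φ : E → ℝ) : Prop :=
  (incMatrix tail head).mulVec φ = b

/-- Net supply `b(S)` of a vertex set `S`. -/
def netSupply (b : V → ℝ) (S : Finset V) : ℝ := ∑ i ∈ S, b i

/-- `b*_max = max_{S ⊆ V} |b(S)|`. -/
noncomputable def bstarMax (b : V → ℝ) : ℝ :=
  sSup {x | ∃ S : Finset V, x = |netSupply b S|}

/-- `b*_min = min { |b(S)| : S ⊆ V, b(S) ≠ 0 }`. -/
noncomputable def bstarMin (b : V → ℝ) : ℝ :=
  sInf {x | ∃ S : Finset V, netSupply b S ≠ 0 ∧ x = |netSupply b S|}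

/-- The support of an arc vector. -/
def suppE (φ : E → ℝ) : Set E := {e | φ e ≠ 0}

/-- An arc set is a forest in the underlying undirected graph:
equivalently, it supports no nonzero circulation. -/
def ForestSupport (tail head : E → V) (s : Set E) : Prop :=
  ∀ γ : E → ℝ, (incMatrix tail head).mulVec γ = 0 → (∀ e, γ e ≠ 0 → e ∈ s) → γ = 0

/-- A basic feasible solution: a positive flow whose support is a forest
in the underlying undirected graph. -/
def IsBFS (tail head : E → V) (b : V → ℝ) (f : E → ℝ) : Prop :=
  IsFlow tail head b f ∧ (∀ e, 0 ≤ f e) ∧ ForestSupport tail head (suppE f)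

/-- A vector is circulation free if its support contains no directed cycle:
equivalently, it supports no nonzero nonnegative circulation. -/
def CirculationFree (tail head : E → V) (φ : E → ℝ) : Prop :=
  ∀ γ : E → ℝ, (incMatrix tail head).mulVec γ = 0 → (∀ e, 0 ≤ γ e) →
    (∀ e, γ e ≠ 0 → φ e ≠ 0) → γ = 0

/-- The weighted graph Laplacian `L(σ) = B · diag(σ/ℓ) · Bᵀ`. -/
noncomputable def lap (tail head : E → V) (ℓ σ : E → ℝ) : Matrix V V ℝ :=
  incMatrix tail head * Matrix.diagonal (fun e => σ e / ℓ e) * (incMatrix tail head).transpose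

/-- The field (slope) of a potential: `Ψ(p)_{ij} = (p_i - p_j)/ℓ_{ij}`. -/
noncomputable def field (tail head : E → V) (ℓ : E → ℝ) (p : V → ℝ) : E → ℝ :=
  fun e => (p (tail e) - p (head e)) / ℓ e

/-- The set of vertices incident to an arc set `H`. -/
def VSet (tail head : E → V) (H : Set E) : Set V :=
  {i | ∃ e ∈ H, tail e = i ∨ head e = i}

/-- Undirected reachability using only arcs in `H`. -/
def UReach (tail head : E → V) (H : Set E) : V → V → Prop :=
  Relation.ReflTransGen
    (fun i j => ∃ e ∈ H, (tail e = i ∧ head e = j) ∨ (tail e = j ∧ head e = i))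

/-- `WalkLen tail head ℓ H i j L`: there is a walk in the underlying undirected
graph of `H` from `i` to `j` of total `ℓ`-length `L`. -/
inductive WalkLen (tail head : E → V) (ℓ : E → ℝ) (H : Set E) : V → V → ℝ → Prop
  | refl (i : V) : WalkLen tail head ℓ H i i 0
  | step {j k : V} {L : ℝ} (i : V) (e : E) (he : e ∈ H)
      (hik : (tail e = i ∧ head e = j) ∨ (tail e = j ∧ head e = i))
      (hw : WalkLen tail head ℓ H j k L) : WalkLen tail head ℓ H i k (ℓ e + L)

/-- The minimal `ℓ`-length of a connecting walk within `H`. -/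
noncomputable def wdist (tail head : E → V) (ℓ : E → ℝ) (H : Set E) (i j : V) : ℝ :=
  sInf {L | WalkLen tail head ℓ H i j L}

/-- The `ℓ`-diameter of `H`: the maximum of `wdist` over pairs of vertices lying in
a common component of `H`. -/
noncomputable def wdiam (tail head : E → V) (ℓ : E → ℝ) (H : Set E) : ℝ :=
  sSup {x | ∃ i j : V, (∃ L, WalkLen tail head ℓ H i j L) ∧ x = wdist tail head ℓ H i j}

/-- Maximum norm of `p` restricted to a vertex set `A`. -/
noncomputable def supNormOn (A : Set V) (p : V → ℝ) : ℝ := sSup {x | ∃ i ∈ A, x = |p i|}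

/-- Maximum norm of an arc vector. -/
noncomputable def eSupNorm (x : E → ℝ) : ℝ := sSup {r | ∃ e : E, r = |x e|}

/-- `min { σ_e : σ_e > 0 }`. -/
noncomputable def minPos (σ : E → ℝ) : ℝ := sInf {x | ∃ e, 0 < σ e ∧ x = σ e}

/-- `min_e ℓ_e`. -/
noncomputable def minLen (ℓ : E → ℝ) : ℝ := sInf {x | ∃ e : E, x = ℓ e}

/-- The cost `ℓᵀφ` of a flow. -/
def cost (ℓ φ : E → ℝ) : ℝ := ∑ e, ℓ e * φ e

/-- The transshipment problem is feasible: there is a positive flow. -/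
def Feasible (tail head : E → V) (b : V → ℝ) : Prop :=
  ∃ φ : E → ℝ, IsFlow tail head b φ ∧ ∀ e, 0 ≤ φ e

/-- `φ` is a minimum-cost positive flow. -/
def IsOptimal (tail head : E → V) (ℓ : E → ℝ) (b : V → ℝ) (φ : E → ℝ) : Prop :=
  IsFlow tail head b φ ∧ (∀ e, 0 ≤ φ e) ∧
    ∀ ψ : E → ℝ, IsFlow tail head b ψ → (∀ e, 0 ≤ ψ e) → cost ℓ φ ≤ cost ℓ ψ

/-- `Ĥ`: the set of arcs carried by some minimum-cost positive flow. -/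
def optSupport (tail head : E → V) (ℓ : E → ℝ) (b : V → ℝ) : Set E :=
  {e | ∃ φ : E → ℝ, IsOptimal tail head ℓ b φ ∧ 0 < φ e}

/-- The current `φ(t) = σ(t)·Ψ(p(t))` of the Physarum solver. -/
noncomputable def current (tail head : E → V) (ℓ : E → ℝ) (σ : ℝ → E → ℝ)
    (p : ℝ → V → ℝ) (t : ℝ) : E → ℝ :=
  fun e => σ t e * field tail head ℓ (p t) e

/-- The Physarum dynamics: `σ(t) > 0` and continuously differentiable on `[0,∞)`,
`L(σ(t)) p(t) = b`, and `σ' = φ - σ` where `φ(t) = σ(t)·Ψ(p(t))`. -/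
structure PhysarumDynamics (tail head : E → V) (ℓ : E → ℝ) (b : V → ℝ)
    (σ : ℝ → E → ℝ) (p : ℝ → V → ℝ) : Prop where
  pos : ∀ t : ℝ, 0 ≤ t → ∀ e, 0 < σ t e
  kirchhoff : ∀ t : ℝ, 0 ≤ t → (lap tail head ℓ (σ t)).mulVec (p t) = b
  contp : ContinuousOn (fun t => p t) (Set.Ici (0 : ℝ))
  dyn : ∀ t ∈ Set.Ici (0 : ℝ), ∀ e : E,
    HasDerivWithinAt (fun s => σ s e)
      (current tail head ℓ σ p t e - σ t e) (Set.Ici (0 : ℝ)) t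

/-- A directed walk from `i` to `j` using the listed arcs in order. -/
inductive DiWalk (tail head : E → V) : V → V → List E → Prop
  | nil (i : V) : DiWalk tail head i i []
  | cons {j k : V} {es : List E} (i : V) (e : E) (h1 : tail e = i) (h2 : head e = j)
      (hw : DiWalk tail head j k es) : DiWalk tail head i k (e :: es)

/-- Discrete `∞`-harmonicity of `p` at node `i` with respect to the arc set `H`:
the maximal in-slope equals the maximal out-slope, and both are nonnegative. -/
noncomputable def InfHarmAt (tail head : E → V) (ℓ : E → ℝ) (H : Set E)
    (p : V → ℝ) (i : V) : Prop :=
  sSup {r | ∃ e ∈ H, head e = i ∧ r = (p (tail e) - p i) / ℓ e}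
    = sSup {r | ∃ e ∈ H, tail e = i ∧ r = (p i - p (head e)) / ℓ e}
  ∧ 0 ≤ sSup {r | ∃ e ∈ H, tail e = i ∧ r = (p i - p (head e)) / ℓ e}

end PhysarumSetup

/-!
Since `φ` is circulation-free, a nonzero circulation `γ` carried by a nonnegative flow `ψ` inside
`supp φ` has entries of both signs; pushing `ψ` along `γ` and along `-γ` until an arc empties
writes `ψ` as a convex combination of two flows of smaller support. Hence `φ` is a convex
combination of basic feasible solutions carried by `supp φ`. These flows lie in an affine space of
dimension `< |supp φ|`, so by Carathéodory `|supp φ|` of them suffice, and the term `w f` largest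
at `ab` has `φ ab ≤ |supp φ| w f ab ≤ |supp φ| w b*_max`. Deleting an arc `e` from the forest
`supp f` leaves a cut crossed by `e` alone, so `f e` is the net supply of a vertex set and
`φ e ≥ w f e ≥ w b*_min` on `supp f`.
-/

section FlowDecomposition

open Function

variable {V E : Type*} {tail head : E → V} {b : V → ℝ}

theorem bstarMin_nonneg : 0 ≤ bstarMin b :=
  Real.sInf_nonneg fun _ ⟨_, _, hx⟩ => hx ▸ abs_nonneg _

theorem bstarMin_le_abs_netSupply [Fintype V] {S : Finset V} (hS : netSupply b S ≠ 0) :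
    bstarMin b ≤ |netSupply b S| :=
  csInf_le ((Set.finite_range fun S : Finset V => |netSupply b S|).subset <|
    by rintro _ ⟨S, -, rfl⟩; exact ⟨S, rfl⟩).bddBelow ⟨S, hS, rfl⟩

theorem abs_netSupply_le_bstarMax [Fintype V] (S : Finset V) : |netSupply b S| ≤ bstarMax b :=
  le_csSup ((Set.finite_range fun S : Finset V => |netSupply b S|).subset <|
    by rintro _ ⟨S, rfl⟩; exact ⟨S, rfl⟩).bddAbove ⟨S, rfl⟩

variable [DecidableEq V]

theorem incMatrix_apply_of_noLoops (hloops : NoLoops tail head) (i : V) (e : E) :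
    incMatrix tail head i e = (if tail e = i then 1 else 0) - (if head e = i then 1 else 0) := by
  by_cases ht : tail e = i
  · have hh : head e ≠ i := fun hh => hloops e (ht.trans hh.symm)
    simp [incMatrix, ht, hh]
  · by_cases hh : head e = i <;> simp [incMatrix, ht, hh]

variable [Fintype E]

theorem netSupply_eq_sum_cut (hloops : NoLoops tail head) {f : E → ℝ}
    (hf : IsFlow tail head b f) (S : Finset V) :
    netSupply b S =
      ∑ e, ((if tail e ∈ S then 1 else 0) - (if head e ∈ S then 1 else 0)) * f e := by
  rw [netSupply, ← hf]
  simp only [Matrix.mulVec, dotProduct, incMatrix_apply_of_noLoops hloops]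
  rw [Finset.sum_comm]
  refine Finset.sum_congr rfl fun e _ => ?_
  rw [← Finset.sum_mul, Finset.sum_sub_distrib, Finset.sum_ite_eq, Finset.sum_ite_eq]

theorem IsFlow.exists_sub_smul_support_ssubset {ψ γ : E → ℝ} (hψ : IsFlow tail head b ψ)
    (hψ0 : ∀ e, 0 ≤ ψ e) (hγ : (incMatrix tail head).mulVec γ = 0)
    (hγψ : support γ ⊆ support ψ) {e₀ : E} (he₀ : 0 < γ e₀) :
    ∃ θ : ℝ, 0 < θ ∧ IsFlow tail head b (ψ - θ • γ) ∧ (∀ e, 0 ≤ (ψ - θ • γ) e) ∧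
      support (ψ - θ • γ) ⊂ support ψ := by
  classical
  obtain ⟨e₁, he₁, hmin⟩ :=
    Finset.exists_min_image {e | 0 < γ e} (fun e => ψ e / γ e) ⟨e₀, by simpa using he₀⟩
  rw [Finset.mem_filter_univ] at he₁
  have hψe₁ : 0 < ψ e₁ := (hψ0 e₁).lt_of_ne' (hγψ he₁.ne')
  refine ⟨ψ e₁ / γ e₁, div_pos hψe₁ he₁, ?_, fun e => ?_, ?_⟩
  · rw [IsFlow, Matrix.mulVec_sub, Matrix.mulVec_smul, hγ, smul_zero, sub_zero]
    exact hψ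
  · rw [Pi.sub_apply, Pi.smul_apply, smul_eq_mul, sub_nonneg]
    rcases lt_or_ge 0 (γ e) with hγe | hγe
    · simpa [le_div_iff₀ hγe] using hmin e (by simpa using hγe)
    · exact (mul_nonpos_of_nonneg_of_nonpos (div_pos hψe₁ he₁).le hγe).trans (hψ0 e)
  · have hsub : support (ψ - (ψ e₁ / γ e₁) • γ) ⊆ support ψ :=
      (support_sub _ _).trans (Set.union_subset le_rfl ((support_const_smul_subset _ _).trans hγψ))
    refine (Set.ssubset_iff_of_subset hsub).mpr ⟨e₁, hψe₁.ne', ?_⟩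
    simp [div_mul_cancel₀ _ he₁.ne']

theorem CirculationFree.exists_pos {φ γ : E → ℝ} (hcf : CirculationFree tail head φ)
    (hγ : (incMatrix tail head).mulVec γ = 0) (hγφ : support γ ⊆ support φ) (hγ0 : γ ≠ 0) :
    ∃ e, 0 < γ e := by
  by_contra! h
  refine hγ0 (neg_eq_zero.mp (hcf (-γ) ?_ (fun e => by simpa using h e) fun e he => hγφ ?_))
  · rw [Matrix.mulVec_neg, hγ, neg_zero]
  · simpa using he

theorem CirculationFree.mem_convexHull_isBFS {φ : E → ℝ} (hcf : CirculationFree tail head φ)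
    {ψ : E → ℝ} (hψ : IsFlow tail head b ψ) (hψ0 : ∀ e, 0 ≤ ψ e) (hψφ : support ψ ⊆ support φ) :
    ψ ∈ convexHull ℝ {f | IsBFS tail head b f ∧ support f ⊆ support φ} := by
  induction hn : (support ψ).ncard using Nat.strong_induction_on generalizing ψ with
  | _ n ih =>
  by_cases hforest : ForestSupport tail head (suppE ψ)
  · exact subset_convexHull ℝ _ ⟨⟨hψ, hψ0, hforest⟩, hψφ⟩
  simp only [ForestSupport, not_forall] at hforest
  obtain ⟨γ, hγ, hγψ, hγ0⟩ := hforest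
  replace hγψ : support γ ⊆ support ψ := hγψ
  have hγ' : (incMatrix tail head).mulVec (-γ) = 0 := by rw [Matrix.mulVec_neg, hγ, neg_zero]
  obtain ⟨e₁, he₁⟩ := hcf.exists_pos hγ (hγψ.trans hψφ) hγ0
  obtain ⟨e₂, he₂⟩ := hcf.exists_pos hγ' (by simpa using hγψ.trans hψφ) (neg_ne_zero.mpr hγ0)
  obtain ⟨θ₁, hθ₁, hflow₁, hnn₁, hss₁⟩ := hψ.exists_sub_smul_support_ssubset hψ0 hγ hγψ he₁
  obtain ⟨θ₂, hθ₂, hflow₂, hnn₂, hss₂⟩ :=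
    hψ.exists_sub_smul_support_ssubset hψ0 hγ' (by simpa using hγψ) he₂
  have h₁ := ih _ (hn ▸ Set.ncard_lt_ncard hss₁) hflow₁ hnn₁ (hss₁.subset.trans hψφ) rfl
  have h₂ := ih _ (hn ▸ Set.ncard_lt_ncard hss₂) hflow₂ hnn₂ (hss₂.subset.trans hψφ) rfl
  have hcomb : (θ₂ / (θ₁ + θ₂)) • (ψ - θ₁ • γ) + (θ₁ / (θ₁ + θ₂)) • (ψ - θ₂ • -γ) = ψ := by
    ext e
    simp only [Pi.add_apply, Pi.smul_apply, Pi.sub_apply, Pi.neg_apply, smul_eq_mul]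
    field_simp
    ring
  rw [← hcomb]
  exact convex_convexHull ℝ _ h₁ h₂ (by positivity) (by positivity) (by field_simp; ring)

theorem finrank_ker_funLeft_compl (s : Set E) :
    Module.finrank ℝ (LinearMap.ker (LinearMap.funLeft ℝ ℝ (Subtype.val : ↥sᶜ → E))) =
      s.ncard := by
  classical
  have hrange := LinearMap.range_eq_top.mpr
    (LinearMap.funLeft_surjective_of_injective ℝ ℝ (Subtype.val : ↥sᶜ → E) Subtype.val_injective)
  have := LinearMap.finrank_range_add_finrank_ker (LinearMap.funLeft ℝ ℝ (Subtype.val : ↥sᶜ → E))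
  rw [hrange, finrank_top, Module.finrank_fintype_fun_eq_card, Module.finrank_fintype_fun_eq_card,
    ← Nat.card_eq_fintype_card, ← Nat.card_eq_fintype_card, Nat.card_coe_set_eq,
    ← Set.ncard_add_ncard_compl s] at this
  omega

variable [DecidableEq E]

theorem incMatrix_mulVec_single (hloops : NoLoops tail head) (e : E) :
    (incMatrix tail head).mulVec (Pi.single e 1) = Pi.single (tail e) 1 - Pi.single (head e) 1 := by
  ext i
  simp [Matrix.mulVec_single, incMatrix_apply_of_noLoops hloops, Pi.single_apply, eq_comm]

theorem UReach.exists_mulVec_eq (hloops : NoLoops tail head) {H : Set E} {i j : V}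
    (h : UReach tail head H i j) :
    ∃ γ : E → ℝ, (incMatrix tail head).mulVec γ = Pi.single i 1 - Pi.single j 1 ∧
      support γ ⊆ H := by
  induction h using Relation.ReflTransGen.head_induction_on with
  | refl => exact ⟨0, by simp, by simp⟩
  | head hstep _ ih =>
    obtain ⟨e, heH, hdir⟩ := hstep
    obtain ⟨γ, hγ, hγH⟩ := ih
    have hsingle : support (Pi.single e (1 : ℝ)) ⊆ H :=
      Pi.support_single_subset.trans (Set.singleton_subset_iff.mpr heH)
    rcases hdir with ⟨rfl, rfl⟩ | ⟨rfl, rfl⟩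
    · refine ⟨Pi.single e 1 + γ, ?_, (support_add _ _).trans (Set.union_subset hsingle hγH)⟩
      rw [Matrix.mulVec_add, incMatrix_mulVec_single hloops, hγ]
      abel
    · refine ⟨γ - Pi.single e 1, ?_, (support_sub _ _).trans (Set.union_subset hγH hsingle)⟩
      rw [Matrix.mulVec_sub, incMatrix_mulVec_single hloops, hγ]
      abel

theorem IsBFS.exists_netSupply_eq_neg [Fintype V] (hloops : NoLoops tail head) {f : E → ℝ}
    (hf : IsBFS tail head b f) {e₀ : E} (he₀ : f e₀ ≠ 0) :
    ∃ S : Finset V, netSupply b S = -f e₀ := by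
  obtain ⟨hflow, -, hforest⟩ := hf
  set H : Set E := suppE f \ {e₀}
  have := Classical.decRel (UReach tail head H)
  let S : Finset V := {v | UReach tail head H (head e₀) v}
  have hhead : head e₀ ∈ S := (Finset.mem_filter_univ _).mpr Relation.ReflTransGen.refl
  have htail : tail e₀ ∉ S := by
    intro hmem
    obtain ⟨γ, hγ, hγH⟩ := UReach.exists_mulVec_eq hloops ((Finset.mem_filter_univ _).mp hmem)
    have hγe₀ : γ e₀ = 0 := notMem_support.mp fun h => (hγH h).2 rfl
    have hcirc : (incMatrix tail head).mulVec (γ + Pi.single e₀ 1) = 0 := by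
      rw [Matrix.mulVec_add, hγ, incMatrix_mulVec_single hloops]
      abel
    have hsupp : support (γ + Pi.single e₀ 1) ⊆ suppE f :=
      (support_add _ _).trans (Set.union_subset (hγH.trans Set.sdiff_subset)
        (Pi.support_single_subset.trans (Set.singleton_subset_iff.mpr he₀)))
    simpa [hγe₀] using congrFun (hforest _ hcirc hsupp) e₀
  have hcross : ∀ e, e ≠ e₀ → f e ≠ 0 → (tail e ∈ S ↔ head e ∈ S) := by
    intro e hne hfe
    have heH : e ∈ H := ⟨hfe, hne⟩
    simp only [S, Finset.mem_filter_univ]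
    exact ⟨fun hr => hr.tail ⟨e, heH, Or.inl ⟨rfl, rfl⟩⟩,
      fun hr => hr.tail ⟨e, heH, Or.inr ⟨rfl, rfl⟩⟩⟩
  refine ⟨S, ?_⟩
  rw [netSupply_eq_sum_cut hloops hflow, Finset.sum_eq_single e₀]
  · simp [htail, hhead]
  · intro e _ hne
    by_cases hfe : f e = 0
    · simp [hfe]
    · simp [hcross e hne hfe]
  · simp

theorem IsBFS.bstarMin_le [Fintype V] (hloops : NoLoops tail head) {f : E → ℝ}
    (hf : IsBFS tail head b f) {e : E} (he : f e ≠ 0) : bstarMin b ≤ f e := by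
  obtain ⟨S, hS⟩ := hf.exists_netSupply_eq_neg hloops he
  have := bstarMin_le_abs_netSupply (b := b) (S := S) (by simpa [hS] using he)
  rwa [hS, abs_neg, abs_of_nonneg (hf.2.1 e)] at this

theorem IsBFS.le_bstarMax [Fintype V] (hloops : NoLoops tail head) {f : E → ℝ}
    (hf : IsBFS tail head b f) (e : E) : f e ≤ bstarMax b := by
  by_cases he : f e = 0
  · simpa [he, netSupply] using abs_netSupply_le_bstarMax (b := b) ∅
  · obtain ⟨S, hS⟩ := hf.exists_netSupply_eq_neg hloops he
    simpa [hS, abs_of_nonneg (hf.2.1 e)] using abs_netSupply_le_bstarMax (b := b) S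

theorem AffineIndependent.card_le_ncard_of_isFlow (hloops : NoLoops tail head) {ι : Type*}
    [Fintype ι] {z : ι → E → ℝ} (hz : AffineIndependent ℝ z)
    (hflow : ∀ i, IsFlow tail head b (z i)) {s : Set E} (hs : ∀ i, support (z i) ⊆ s)
    {e : E} (he : e ∈ s) : Fintype.card ι ≤ s.ncard := by
  set K := LinearMap.ker (LinearMap.funLeft ℝ ℝ (Subtype.val : ↥sᶜ → E))
  have hspan : vectorSpan ℝ (Set.range z) ≤ K ⊓ LinearMap.ker (incMatrix tail head).mulVecLin := by
    rw [vectorSpan_def, Submodule.span_le]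
    rintro _ ⟨_, ⟨i, rfl⟩, _, ⟨j, rfl⟩, rfl⟩
    refine ⟨?_, ?_⟩
    · ext ⟨e', he'⟩
      simp [LinearMap.funLeft, notMem_support.mp fun h => he' (hs i h),
        notMem_support.mp fun h => he' (hs j h)]
    · have hi : (incMatrix tail head).mulVec (z i) = b := hflow i
      have hj : (incMatrix tail head).mulVec (z j) = b := hflow j
      simp [Matrix.mulVec_sub, hi, hj]
  have hlt : K ⊓ LinearMap.ker (incMatrix tail head).mulVecLin < K := by
    refine inf_le_left.lt_of_ne fun h => ?_
    have hK : Pi.single e 1 ∈ K := by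
      ext ⟨e', he'⟩
      simp [LinearMap.funLeft, show e' ≠ e from fun h => he' (h ▸ he)]
    have := congrFun (h.symm ▸ hK).2 (tail e)
    simp [incMatrix_mulVec_single hloops, hloops e] at this
  have := Submodule.finrank_lt_finrank_of_lt hlt
  rw [finrank_ker_funLeft_compl] at this
  have := Submodule.finrank_mono hspan
  have := hz.card_le_finrank_succ
  omega

theorem CirculationFree.exists_isBFS_smul_le [Fintype V] (hloops : NoLoops tail head)
    {φ : E → ℝ} (hcf : CirculationFree tail head φ) (hflow : IsFlow tail head b φ)
    (hpos : ∀ e, 0 ≤ φ e) {ab : E} (hab : φ ab ≠ 0) :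
    ∃ f : E → ℝ, ∃ w : ℝ, IsBFS tail head b f ∧ 0 < w ∧ (∀ e, w * f e ≤ φ e) ∧
      φ ab ≤ (suppE φ).ncard * (w * f ab) := by
  obtain ⟨ι, _, z, w, hzs, hz, hw, hw1, hφ⟩ :=
    eq_pos_convex_span_of_mem_convexHull (hcf.mem_convexHull_isBFS hflow hpos subset_rfl)
  have hz' (i : ι) : IsBFS tail head b (z i) ∧ support (z i) ⊆ support φ := hzs ⟨i, rfl⟩
  have hφe (e : E) : φ e = ∑ i, w i * z i e := by simp [← hφ, Finset.sum_apply]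
  have hterm (i : ι) (e : E) : 0 ≤ w i * z i e := mul_nonneg (hw i).le ((hz' i).1.2.1 e)
  have : Nonempty ι := by
    by_contra h
    simp [not_nonempty_iff.mp h] at hw1
  obtain ⟨i, hi⟩ := Finite.exists_max fun i => w i * z i ab
  have hcard : Fintype.card ι ≤ (suppE φ).ncard :=
    hz.card_le_ncard_of_isFlow hloops (fun i => (hz' i).1.1) (fun i => (hz' i).2) hab
  refine ⟨z i, w i, (hz' i).1, hw i, fun e => ?_, ?_⟩
  · rw [hφe e]
    exact Finset.single_le_sum (fun j _ => hterm j e) (Finset.mem_univ i)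
  · calc φ ab ≤ ∑ _j : ι, w i * z i ab := by
          rw [hφe ab]
          exact Finset.sum_le_sum fun j _ => hi j
      _ = Fintype.card ι * (w i * z i ab) := by simp
      _ ≤ (suppE φ).ncard * (w i * z i ab) := by gcongr; exact hterm i ab

end FlowDecomposition

theorem statement_3_general {V E : Type*} [Fintype V] [Fintype E] [DecidableEq V] [DecidableEq E]
    (tail head : E → V)
    (hloops : NoLoops tail head)
    (b : V → ℝ)
    (φ : E → ℝ) (hflow : IsFlow tail head b φ) (hpos : ∀ e, 0 ≤ φ e)
    (hcf : CirculationFree tail head φ)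
    (ab : E) (hab : φ ab ≠ 0) :
    ∃ f : E → ℝ, IsBFS tail head b f ∧ 0 < f ab ∧
      ∀ e : E, f e ≠ 0 →
        bstarMin b / bstarMax b * (φ ab / ((suppE φ).ncard : ℝ)) ≤ φ e := by
  obtain ⟨f, w, hf, hw, hfφ, hφab⟩ := hcf.exists_isBFS_smul_le hloops hflow hpos hab
  have hn : (0 : ℝ) < (suppE φ).ncard := by exact_mod_cast (Set.ncard_pos).mpr ⟨ab, hab⟩
  have hφab' : φ ab / (suppE φ).ncard ≤ w * f ab := by rwa [div_le_iff₀ hn, mul_comm]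
  have hfab : 0 < f ab :=
    pos_of_mul_pos_right ((div_pos ((hpos ab).lt_of_ne' hab) hn).trans_le hφab') hw.le
  have hbmax : 0 < bstarMax b := hfab.trans_le (hf.le_bstarMax hloops ab)
  refine ⟨f, hf, hfab, fun e he => ?_⟩
  calc bstarMin b / bstarMax b * (φ ab / (suppE φ).ncard)
      ≤ bstarMin b / bstarMax b * (w * bstarMax b) := by
        gcongr
        · exact div_nonneg bstarMin_nonneg hbmax.le
        · exact hφab'.trans (mul_le_mul_of_nonneg_left (hf.le_bstarMax hloops ab) hw.le)
    _ = w * bstarMin b := by field_simp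
    _ ≤ w * f e := mul_le_mul_of_nonneg_left (hf.bstarMin_le hloops he) hw.le
    _ ≤ φ e := hfφ e

theorem statement_3 {V E : Type*} [Fintype V] [Fintype E] [DecidableEq V] [DecidableEq E]
    (tail head : E → V)
    (hloops : NoLoops tail head) (hmult : NoMultiple tail head)
    (hconn : IsConnectedGraph tail head)
    (b : V → ℝ) (hb : ∑ i, b i = 0)
    (φ : E → ℝ) (hflow : IsFlow tail head b φ) (hpos : ∀ e, 0 ≤ φ e)
    (hcf : CirculationFree tail head φ)
    (ab : E) (hab : φ ab ≠ 0) :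
    ∃ f : E → ℝ, IsBFS tail head b f ∧ 0 < f ab ∧
      ∀ e : E, f e ≠ 0 →
        bstarMin b / bstarMax b * (φ ab / ((suppE φ).ncard : ℝ)) ≤ φ e :=
  statement_3_general tail head hloops b φ hflow hpos hcf ab hab
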